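/- arXiv:cs/0601029 — 5 statements merged into one kernel-verified Lean document; each statement's English description precedes it below -/
import Mathlib

section
/- Let σ > 0, ρ ∈ [0,1], P₁, P₂, N > 0. Let (S₁,S₂) be a zero-mean jointly Gaussian pair with variances σ² and correlation ρ (S₁ = σX, S₂ = σ(ρX+√(1−ρ²)W), X, W independent standard Gaussians), and let Z be an independent Gaussian random variable of mean 0 and variance N. Define the channel output of uncoded transmission Y = (√P₁/σ)·S₁ + (√P₂/σ)·S₂ + Z. Then the minimum over a ∈ ℝ of E[(S₁ − aY)²] equals σ²·(2P₁ + 4ρ√(P₁P₂) + (1+ρ²)P₂ + N − 2√(P₁ + 2ρ√(P₁P₂) + ρ²P₂)·(√P₁ + ρ√P₂)) / (P₁ + P₂ + 2ρ√(P₁P₂) + N), which equals σ²·((1−ρ²)P₂ + N)/(P₁ + P₂ + 2ρ√(P₁P₂) + N). (Distortion of uncoded transmission, Theorem 2.) -/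
open MeasureTheory ProbabilityTheory Real Filter Set
open scoped ENNReal NNReal

lemma integ_exp_half : Integrable (fun x : ℝ => Real.exp (-(2⁻¹ : ℝ) * x ^ 2)) :=
  integrable_exp_neg_mul_sq (by norm_num)

lemma integ_mul_exp_half : Integrable (fun x : ℝ => x * Real.exp (-(2⁻¹ : ℝ) * x ^ 2)) :=
  integrable_mul_exp_neg_mul_sq (by norm_num)

lemma integ_sq_exp_half : Integrable (fun x : ℝ => x ^ 2 * Real.exp (-(2⁻¹ : ℝ) * x ^ 2)) := by
  have := integrable_rpow_mul_exp_neg_mul_sq (b := 2⁻¹) (by norm_num) (s := 2) (by norm_num)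
  have h2 : ∀ x : ℝ, x ^ (2 : ℝ) = x ^ (2 : ℕ) := fun x => Real.rpow_two x ▸ by norm_num
  simpa [Real.rpow_two] using this

lemma hasDerivAt_negexp (x : ℝ) :
    HasDerivAt (fun x : ℝ => -Real.exp (-(2⁻¹ : ℝ) * x ^ 2))
      (x * Real.exp (-(2⁻¹ : ℝ) * x ^ 2)) x := by
  have h1 : HasDerivAt (fun x : ℝ => -(2⁻¹ : ℝ) * x ^ 2) (-x) x := by
    have := (hasDerivAt_pow 2 x).const_mul (-(2⁻¹ : ℝ))
    exact this.congr_deriv (by norm_num; ring)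
  have := h1.exp.neg
  exact this.congr_deriv (by ring)

lemma tendsto_negexp_atBot :
    Tendsto (fun x : ℝ => -Real.exp (-(2⁻¹ : ℝ) * x ^ 2)) atBot (nhds 0) := by
  have hsq : Tendsto (fun x : ℝ => x ^ 2) atBot atTop := by
    have h0 : Tendsto (fun x : ℝ => x ^ 2) atTop atTop :=
      tendsto_pow_atTop two_ne_zero
    have := h0.comp (tendsto_neg_atBot_atTop : Tendsto (fun x : ℝ => -x) atBot atTop)
    simpa [Function.comp_def, neg_pow] using this
  have h1 : Tendsto (fun x : ℝ => -(2⁻¹ : ℝ) * x ^ 2) atBot atBot :=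
    hsq.const_mul_atTop_of_neg (by norm_num)
  have := (Real.tendsto_exp_atBot.comp h1).neg
  simpa [Function.comp] using this

lemma tendsto_negexp_atTop :
    Tendsto (fun x : ℝ => -Real.exp (-(2⁻¹ : ℝ) * x ^ 2)) atTop (nhds 0) := by
  have h0 : Tendsto (fun x : ℝ => x ^ 2) atTop atTop := tendsto_pow_atTop two_ne_zero
  have h1 : Tendsto (fun x : ℝ => -(2⁻¹ : ℝ) * x ^ 2) atTop atBot :=
    h0.const_mul_atTop_of_neg (by norm_num)
  have := (Real.tendsto_exp_atBot.comp h1).neg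
  simpa [Function.comp] using this

lemma int_mul_exp_half_eq : ∫ x : ℝ, x * Real.exp (-(2⁻¹ : ℝ) * x ^ 2) = 0 := by
  have h := MeasureTheory.integral_of_hasDerivAt_of_tendsto
    (f := fun x : ℝ => -Real.exp (-(2⁻¹ : ℝ) * x ^ 2))
    (f' := fun x : ℝ => x * Real.exp (-(2⁻¹ : ℝ) * x ^ 2))
    (m := 0) (n := 0)
    (fun x => hasDerivAt_negexp x) integ_mul_exp_half tendsto_negexp_atBot tendsto_negexp_atTop
  simpa using h

lemma int_sq_exp_half_eq :
    ∫ x : ℝ, x ^ 2 * Real.exp (-(2⁻¹ : ℝ) * x ^ 2) = Real.sqrt (2 * π) := by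
  have h := MeasureTheory.integral_mul_deriv_eq_deriv_mul_of_integrable
    (u := fun x : ℝ => x) (u' := fun _ : ℝ => (1 : ℝ))
    (v := fun x : ℝ => -Real.exp (-(2⁻¹ : ℝ) * x ^ 2))
    (v' := fun x : ℝ => x * Real.exp (-(2⁻¹ : ℝ) * x ^ 2))
    (fun x _ => hasDerivAt_id x) (fun x _ => hasDerivAt_negexp x)
    (by simp only [Pi.mul_def, ← mul_assoc, ← sq]; exact integ_sq_exp_half)
    (by simp only [Pi.mul_def, one_mul]; exact integ_exp_half.neg)
    (by simp only [Pi.mul_def, mul_neg]; exact integ_mul_exp_half.neg)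
  have h2 : ∫ x : ℝ, x * (x * Real.exp (-(2⁻¹ : ℝ) * x ^ 2)) =
      ∫ x : ℝ, x ^ 2 * Real.exp (-(2⁻¹ : ℝ) * x ^ 2) := by
    congr 1; funext x; ring
  have h3 : ∫ x : ℝ, Real.exp (-(2⁻¹ : ℝ) * x ^ 2) = Real.sqrt (2 * π) := by
    have := integral_gaussian (2⁻¹ : ℝ)
    rw [this, show π / (2⁻¹ : ℝ) = 2 * π by ring]
  rw [h2] at h
  rw [h]
  rw [← h3]
  rw [← integral_neg]
  congr 1; funext x; ring

lemma gaussPDF_eq (x : ℝ) :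
    gaussianPDFReal 0 1 x = (Real.sqrt (2 * π))⁻¹ * Real.exp (-(2⁻¹ : ℝ) * x ^ 2) := by
  simp only [gaussianPDFReal]
  norm_num
  left
  ring

lemma integral_gauss01 (g : ℝ → ℝ) :
    ∫ x, g x ∂(gaussianReal 0 1) = ∫ x, gaussianPDFReal 0 1 x * g x := by
  rw [gaussianReal_of_var_ne_zero 0 one_ne_zero]
  have : (gaussianPDF 0 1) = fun x => ((gaussianPDFReal 0 1 x).toNNReal : ℝ≥0∞) := rfl
  rw [this, integral_withDensity_eq_integral_smul
    (by exact (measurable_gaussianPDFReal 0 1).real_toNNReal) g]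
  congr 1; funext x
  rw [NNReal.smul_def, Real.coe_toNNReal _ (gaussianPDFReal_nonneg 0 1 x), smul_eq_mul]

lemma integrable_gauss01_iff (g : ℝ → ℝ) :
    Integrable g (gaussianReal 0 1) ↔
      Integrable (fun x => g x * gaussianPDFReal 0 1 x) := by
  rw [gaussianReal_of_var_ne_zero 0 one_ne_zero]
  rw [integrable_withDensity_iff (measurable_gaussianPDF 0 1)
    (Filter.Eventually.of_forall fun x => ENNReal.ofReal_lt_top)]
  constructor <;> intro h <;> refine h.congr (Filter.Eventually.of_forall fun x => ?_) <;>
    simp [gaussianPDF, ENNReal.toReal_ofReal (gaussianPDFReal_nonneg 0 1 x)]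

lemma integrable_id_gauss01 : Integrable (fun x : ℝ => x) (gaussianReal 0 1) := by
  rw [integrable_gauss01_iff]
  have : (fun x : ℝ => x * gaussianPDFReal 0 1 x)
      = fun x => (Real.sqrt (2 * π))⁻¹ * (x * Real.exp (-(2⁻¹ : ℝ) * x ^ 2)) := by
    funext x; rw [gaussPDF_eq]; ring
  rw [this]
  exact integ_mul_exp_half.const_mul _

lemma integrable_sq_gauss01 : Integrable (fun x : ℝ => x ^ 2) (gaussianReal 0 1) := by
  rw [integrable_gauss01_iff]
  have : (fun x : ℝ => x ^ 2 * gaussianPDFReal 0 1 x)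
      = fun x => (Real.sqrt (2 * π))⁻¹ * (x ^ 2 * Real.exp (-(2⁻¹ : ℝ) * x ^ 2)) := by
    funext x; rw [gaussPDF_eq]; ring
  rw [this]
  exact integ_sq_exp_half.const_mul _

lemma integral_id_gauss01 : ∫ x, x ∂(gaussianReal 0 1) = 0 := by
  rw [integral_gauss01]
  have : (fun x : ℝ => gaussianPDFReal 0 1 x * x)
      = fun x => (Real.sqrt (2 * π))⁻¹ * (x * Real.exp (-(2⁻¹ : ℝ) * x ^ 2)) := by
    funext x; rw [gaussPDF_eq]; ring
  rw [this, integral_const_mul, int_mul_exp_half_eq, mul_zero]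

lemma integral_sq_gauss01 : ∫ x, x ^ 2 ∂(gaussianReal 0 1) = 1 := by
  rw [integral_gauss01]
  have : (fun x : ℝ => gaussianPDFReal 0 1 x * x ^ 2)
      = fun x => (Real.sqrt (2 * π))⁻¹ * (x ^ 2 * Real.exp (-(2⁻¹ : ℝ) * x ^ 2)) := by
    funext x; rw [gaussPDF_eq]; ring
  rw [this, integral_const_mul, int_sq_exp_half_eq]
  rw [inv_mul_cancel₀]
  positivity

set_option linter.unusedSectionVars false
section Transfer
variable {Ω : Type*} [MeasurableSpace Ω] {μ : Measure Ω} [IsProbabilityMeasure μ]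

lemma aemeasurable_of_map_gauss {X : Ω → ℝ} (hX : μ.map X = gaussianReal 0 1) :
    AEMeasurable X μ := by
  by_contra h
  rw [Measure.map_of_not_aemeasurable h] at hX
  have h1 : (gaussianReal 0 1) Set.univ = 1 := measure_univ
  rw [← hX] at h1
  simp at h1

lemma integrable_of_map_gauss {X : Ω → ℝ} (hX : μ.map X = gaussianReal 0 1) :
    Integrable X μ := by
  have hm := aemeasurable_of_map_gauss hX
  have := (integrable_map_measure (f := X) (g := fun x : ℝ => x)
    aestronglyMeasurable_id hm).mp (by rw [hX]; exact integrable_id_gauss01)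
  exact this

lemma integrable_sq_of_map_gauss {X : Ω → ℝ} (hX : μ.map X = gaussianReal 0 1) :
    Integrable (fun ω => (X ω) ^ 2) μ := by
  have hm := aemeasurable_of_map_gauss hX
  have := (integrable_map_measure (f := X) (g := fun x : ℝ => x ^ 2)
    (by fun_prop) hm).mp (by rw [hX]; exact integrable_sq_gauss01)
  exact this

lemma integral_of_map_gauss {X : Ω → ℝ} (hX : μ.map X = gaussianReal 0 1) :
    ∫ ω, X ω ∂μ = 0 := by
  have hm := aemeasurable_of_map_gauss hX
  have := integral_map (f := fun x : ℝ => x) hm aestronglyMeasurable_id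
  rw [hX, integral_id_gauss01] at this
  exact this.symm

lemma integral_sq_of_map_gauss {X : Ω → ℝ} (hX : μ.map X = gaussianReal 0 1) :
    ∫ ω, (X ω) ^ 2 ∂μ = 1 := by
  have hm := aemeasurable_of_map_gauss hX
  have := integral_map (f := fun x : ℝ => x ^ 2) hm (by fun_prop)
  rw [hX, integral_sq_gauss01] at this
  exact this.symm

end Transfer

section Main
variable {Ω : Type*} [MeasurableSpace Ω] {μ : Measure Ω} [IsProbabilityMeasure μ]

lemma second_moment_three (X W Z' : Ω → ℝ)
    (hindep : iIndepFun
      ![X, W, Z'] μ)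
    (hX : μ.map X = gaussianReal 0 1)
    (hW : μ.map W = gaussianReal 0 1)
    (hZ' : μ.map Z' = gaussianReal 0 1)
    (b c d : ℝ) :
    ∫ ω, (b * X ω + c * W ω + d * Z' ω) ^ 2 ∂μ = b ^ 2 + c ^ 2 + d ^ 2 := by
  have hXW : IndepFun X W μ := by
    simpa using hindep.indepFun (show (0 : Fin 3) ≠ 1 by decide)
  have hXZ : IndepFun X Z' μ := by
    simpa using hindep.indepFun (show (0 : Fin 3) ≠ 2 by decide)
  have hWZ : IndepFun W Z' μ := by
    simpa using hindep.indepFun (show (1 : Fin 3) ≠ 2 by decide)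
  have iX := integrable_of_map_gauss hX
  have iW := integrable_of_map_gauss hW
  have iZ := integrable_of_map_gauss hZ'
  have iX2 := integrable_sq_of_map_gauss hX
  have iW2 := integrable_sq_of_map_gauss hW
  have iZ2 := integrable_sq_of_map_gauss hZ'
  have iXW : Integrable (fun ω => X ω * W ω) μ := hXW.integrable_mul iX iW
  have iXZ : Integrable (fun ω => X ω * Z' ω) μ := hXZ.integrable_mul iX iZ
  have iWZ : Integrable (fun ω => W ω * Z' ω) μ := hWZ.integrable_mul iW iZ
  have eXW : ∫ ω, X ω * W ω ∂μ = 0 := by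
    have h := hXW.integral_mul_eq_mul_integral iX.aestronglyMeasurable iW.aestronglyMeasurable
    simp only [Pi.mul_def] at h
    rw [h, integral_of_map_gauss hX, zero_mul]
  have eXZ : ∫ ω, X ω * Z' ω ∂μ = 0 := by
    have h := hXZ.integral_mul_eq_mul_integral iX.aestronglyMeasurable iZ.aestronglyMeasurable
    simp only [Pi.mul_def] at h
    rw [h, integral_of_map_gauss hX, zero_mul]
  have eWZ : ∫ ω, W ω * Z' ω ∂μ = 0 := by
    have h := hWZ.integral_mul_eq_mul_integral iW.aestronglyMeasurable iZ.aestronglyMeasurable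
    simp only [Pi.mul_def] at h
    rw [h, integral_of_map_gauss hW, zero_mul]
  have hfun : (fun ω => (b * X ω + c * W ω + d * Z' ω) ^ 2)
      = fun ω => b ^ 2 * (X ω) ^ 2 + c ^ 2 * (W ω) ^ 2 + d ^ 2 * (Z' ω) ^ 2
        + (2 * b * c) * (X ω * W ω) + (2 * b * d) * (X ω * Z' ω)
        + (2 * c * d) * (W ω * Z' ω) := by
    funext ω; ring
  rw [hfun]
  have i1 := iX2.const_mul (b ^ 2)
  have i2 := iW2.const_mul (c ^ 2)
  have i3 := iZ2.const_mul (d ^ 2)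
  have i4 := iXW.const_mul (2 * b * c)
  have i5 := iXZ.const_mul (2 * b * d)
  have i6 := iWZ.const_mul (2 * c * d)
  have I2 : Integrable (fun ω => b ^ 2 * (X ω) ^ 2 + c ^ 2 * (W ω) ^ 2) μ := i1.add i2
  have I3 : Integrable (fun ω => b ^ 2 * (X ω) ^ 2 + c ^ 2 * (W ω) ^ 2
      + d ^ 2 * (Z' ω) ^ 2) μ := I2.add i3
  have I4 : Integrable (fun ω => b ^ 2 * (X ω) ^ 2 + c ^ 2 * (W ω) ^ 2
      + d ^ 2 * (Z' ω) ^ 2 + (2 * b * c) * (X ω * W ω)) μ := I3.add i4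
  have I5 : Integrable (fun ω => b ^ 2 * (X ω) ^ 2 + c ^ 2 * (W ω) ^ 2
      + d ^ 2 * (Z' ω) ^ 2 + (2 * b * c) * (X ω * W ω)
      + (2 * b * d) * (X ω * Z' ω)) μ := I4.add i5
  rw [integral_add I5 i6, integral_add I4 i5, integral_add I3 i4, integral_add I2 i3,
    integral_add i1 i2,
    integral_const_mul, integral_const_mul, integral_const_mul, integral_const_mul,
    integral_const_mul, integral_const_mul,
    integral_sq_of_map_gauss hX, integral_sq_of_map_gauss hW, integral_sq_of_map_gauss hZ',
    eXW, eXZ, eWZ]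
  ring

end Main

/-- Distortion of uncoded transmission (Theorem 2): for the uncoded channel output
`Y = (√P₁/σ)S₁ + (√P₂/σ)S₂ + Z`, the minimum over `a ∈ ℝ` of `E[(S₁ − aY)²]` is attained
and equals the expression of Theorem 2, which simplifies to
`σ²((1−ρ²)P₂ + N)/(P₁ + P₂ + 2ρ√(P₁P₂) + N)`. -/
theorem uncoded_transmission_distortion
    {Ω : Type*} [MeasurableSpace Ω] (μ : Measure Ω) [IsProbabilityMeasure μ]
    (σ ρ P₁ P₂ N : ℝ) (hσ : 0 < σ) (hρ : ρ ∈ Set.Icc (0:ℝ) 1)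
    (hP₁ : 0 < P₁) (hP₂ : 0 < P₂) (hN : 0 < N)
    (X W Z' : Ω → ℝ)
    (hindep : iIndepFun
      ![X, W, Z'] μ)
    (hX : μ.map X = gaussianReal 0 1)
    (hW : μ.map W = gaussianReal 0 1)
    (hZ' : μ.map Z' = gaussianReal 0 1)
    (S₁ S₂ Z Y : Ω → ℝ)
    (hS₁ : S₁ = fun ω => σ * X ω)
    (hS₂ : S₂ = fun ω => σ * (ρ * X ω + Real.sqrt (1 - ρ ^ 2) * W ω))
    (hZ : Z = fun ω => Real.sqrt N * Z' ω)
    (hY : Y = fun ω =>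
      (Real.sqrt P₁ / σ) * S₁ ω + (Real.sqrt P₂ / σ) * S₂ ω + Z ω) :
    IsLeast {d : ℝ | ∃ a : ℝ, d = ∫ ω, (S₁ ω - a * Y ω) ^ 2 ∂μ}
      (σ ^ 2 *
        ((2 * P₁ + 4 * ρ * Real.sqrt (P₁ * P₂) + (1 + ρ ^ 2) * P₂ + N -
            2 * Real.sqrt (P₁ + 2 * ρ * Real.sqrt (P₁ * P₂) + ρ ^ 2 * P₂) *
              (Real.sqrt P₁ + ρ * Real.sqrt P₂)) /
          (P₁ + P₂ + 2 * ρ * Real.sqrt (P₁ * P₂) + N))) ∧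
    σ ^ 2 *
        ((2 * P₁ + 4 * ρ * Real.sqrt (P₁ * P₂) + (1 + ρ ^ 2) * P₂ + N -
            2 * Real.sqrt (P₁ + 2 * ρ * Real.sqrt (P₁ * P₂) + ρ ^ 2 * P₂) *
              (Real.sqrt P₁ + ρ * Real.sqrt P₂)) /
          (P₁ + P₂ + 2 * ρ * Real.sqrt (P₁ * P₂) + N)) =
      σ ^ 2 * ((1 - ρ ^ 2) * P₂ + N) /
        (P₁ + P₂ + 2 * ρ * Real.sqrt (P₁ * P₂) + N) := by
  obtain ⟨hρ0, hρ1⟩ := hρ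
  have hσ' : σ ≠ 0 := hσ.ne'
  have h1ρ : (0:ℝ) ≤ 1 - ρ ^ 2 := by nlinarith
  set u : ℝ := Real.sqrt P₁ + ρ * Real.sqrt P₂ with hu_def
  have hu0 : 0 ≤ u := by positivity
  have s12 : Real.sqrt (P₁ * P₂) = Real.sqrt P₁ * Real.sqrt P₂ := Real.sqrt_mul hP₁.le _
  have sP₁ : Real.sqrt P₁ ^ 2 = P₁ := Real.sq_sqrt hP₁.le
  have sP₂ : Real.sqrt P₂ ^ 2 = P₂ := Real.sq_sqrt hP₂.le
  have sN : Real.sqrt N ^ 2 = N := Real.sq_sqrt hN.le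
  have sρ : Real.sqrt (1 - ρ ^ 2) ^ 2 = 1 - ρ ^ 2 := Real.sq_sqrt h1ρ
  set E : ℝ := (1 - ρ ^ 2) * P₂ + N with hE_def
  have hE0 : 0 < E := by nlinarith
  have hDeq : P₁ + P₂ + 2 * ρ * Real.sqrt (P₁ * P₂) + N = u ^ 2 + E := by
    rw [s12, hu_def, hE_def]; nlinarith [sP₁, sP₂]
  set D : ℝ := u ^ 2 + E with hD_def
  have hD0 : 0 < D := by rw [hD_def]; nlinarith [sq_nonneg u]
  clear_value u E D
  -- the sqrt in the statement equals u
  have hsqrtu : Real.sqrt (P₁ + 2 * ρ * Real.sqrt (P₁ * P₂) + ρ ^ 2 * P₂) = u := by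
    rw [show P₁ + 2 * ρ * Real.sqrt (P₁ * P₂) + ρ ^ 2 * P₂ = u ^ 2 by
      rw [s12, hu_def]; linear_combination -sP₁ - ρ ^ 2 * sP₂]
    exact Real.sqrt_sq hu0
  -- the stated value equals σ² E / D
  have hval : σ ^ 2 *
        ((2 * P₁ + 4 * ρ * Real.sqrt (P₁ * P₂) + (1 + ρ ^ 2) * P₂ + N -
            2 * Real.sqrt (P₁ + 2 * ρ * Real.sqrt (P₁ * P₂) + ρ ^ 2 * P₂) * u) /
          (P₁ + P₂ + 2 * ρ * Real.sqrt (P₁ * P₂) + N)) = σ ^ 2 * E / D := by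
    rw [hsqrtu, hDeq]
    rw [show 2 * P₁ + 4 * ρ * Real.sqrt (P₁ * P₂) + (1 + ρ ^ 2) * P₂ + N -
        2 * u * u
        = E by rw [hu_def, s12, hE_def]; linear_combination -2 * sP₁ - 2 * ρ ^ 2 * sP₂]
    rw [mul_div_assoc]
  -- the key computation
  have key : ∀ a : ℝ, ∫ ω, (S₁ ω - a * Y ω) ^ 2 ∂μ
      = (σ - a * u) ^ 2 + a ^ 2 * ((1 - ρ ^ 2) * P₂) + a ^ 2 * N := by
    intro a
    have hfun : (fun ω => (S₁ ω - a * Y ω) ^ 2)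
        = fun ω => ((σ - a * u) * X ω
            + (-(a * (Real.sqrt P₂ * Real.sqrt (1 - ρ ^ 2)))) * W ω
            + (-(a * Real.sqrt N)) * Z' ω) ^ 2 := by
      subst hS₁ hS₂ hZ hY
      funext ω
      congr 1
      rw [hu_def]
      field_simp
      ring
    rw [hfun, second_moment_three X W Z' hindep hX hW hZ']
    have : (-(a * (Real.sqrt P₂ * Real.sqrt (1 - ρ ^ 2)))) ^ 2
        = a ^ 2 * ((1 - ρ ^ 2) * P₂) := by
      linear_combination a ^ 2 * Real.sqrt (1 - ρ ^ 2) ^ 2 * sP₂ + a ^ 2 * P₂ * sρ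
    rw [this]
    have : (-(a * Real.sqrt N)) ^ 2 = a ^ 2 * N := by linear_combination a ^ 2 * sN
    rw [this]
  rw [hval]
  refine ⟨⟨⟨σ * u / D, ?_⟩, ?_⟩, ?_⟩
  · have hD' : D ≠ 0 := hD0.ne'
    rw [key (σ * u / D), hD_def, hE_def]
    have hD'' : u ^ 2 + ((1 - ρ ^ 2) * P₂ + N) ≠ 0 := by rw [← hE_def, ← hD_def]; exact hD'
    field_simp
    ring
  · rintro d ⟨a, rfl⟩
    rw [key a, div_le_iff₀ hD0, hD_def, hE_def]
    nlinarith [sq_nonneg (σ * u - a * (u ^ 2 + ((1 - ρ ^ 2) * P₂ + N)))]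
  · rw [hDeq]
end

section
/- Let σ, P, N > 0 and ρ ∈ [0,1). For every D with σ²(1−ρ) ≤ D ≤ σ², the inequality (1/2)·log₂(1 + 2P(1+ρ)/N) ≥ (1/2)·log₂( σ⁴(1−ρ²) / (D² − (ρσ² − (σ² − D))²) ) holds if and only if D ≥ σ²·(P(1−ρ²) + N)/(2P(1+ρ) + N). (Inversion of the converse bound in the intermediate-distortion regime, proof of Corollary 1.) -/
/-- Inversion of the converse bound in the intermediate-distortion regime
(proof of Corollary 1): for `σ²(1−ρ) ≤ D ≤ σ²`, the channel-capacity expression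
dominates the symmetric rate-distortion expression
`R(D,D) = (1/2)log₂(σ⁴(1−ρ²)/(D² − (ρσ² − (σ² − D))²))` if and only if
`D ≥ σ²(P(1−ρ²)+N)/(2P(1+ρ)+N)`. -/
theorem converse_inversion_intermediate_distortion
    (σ P N ρ D : ℝ) (hσ : 0 < σ) (hP : 0 < P) (hN : 0 < N)
    (hρ : ρ ∈ Set.Ico (0:ℝ) 1)
    (hD₀ : σ ^ 2 * (1 - ρ) ≤ D) (hD₁ : D ≤ σ ^ 2) :
    (1 / 2) * Real.logb 2 (1 + 2 * P * (1 + ρ) / N) ≥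
      (1 / 2) * Real.logb 2
        (σ ^ 4 * (1 - ρ ^ 2) / (D ^ 2 - (ρ * σ ^ 2 - (σ ^ 2 - D)) ^ 2)) ↔
    D ≥ σ ^ 2 * (P * (1 - ρ ^ 2) + N) / (2 * P * (1 + ρ) + N) := by
  obtain ⟨hρ0, hρ1⟩ := hρ
  have hσ2 : 0 < σ ^ 2 := by positivity
  have h1ρ : 0 < 1 - ρ := by linarith
  have h1ρ' : 0 < 1 + ρ := by linarith
  have hA : 0 < σ ^ 2 * (1 - ρ) := mul_pos hσ2 h1ρ
  have hden : 0 < D ^ 2 - (ρ * σ ^ 2 - (σ ^ 2 - D)) ^ 2 := by nlinarith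
  have hnum : 0 < σ ^ 4 * (1 - ρ ^ 2) := by nlinarith [pow_pos hσ 4]
  have hR : 0 < σ ^ 4 * (1 - ρ ^ 2) / (D ^ 2 - (ρ * σ ^ 2 - (σ ^ 2 - D)) ^ 2) :=
    div_pos hnum hden
  have hL : 0 < 1 + 2 * P * (1 + ρ) / N := by positivity
  have hd2 : 0 < 2 * P * (1 + ρ) + N := by positivity
  rw [ge_iff_le, mul_le_mul_iff_right₀ (by norm_num : (0:ℝ) < 1/2),
    Real.logb_le_logb (by norm_num) hR hL, div_le_iff₀ hden,
    show 1 + 2 * P * (1 + ρ) / N = (N + 2 * P * (1 + ρ)) / N by field_simp,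
    div_mul_eq_mul_div, le_div_iff₀ hN, ge_iff_le, div_le_iff₀ hd2]
  constructor
  · intro h
    by_contra hc
    push_neg at hc
    nlinarith [mul_pos hA (sub_pos.mpr hc)]
  · intro h
    nlinarith [mul_nonneg hA.le (sub_nonneg.mpr h)]
end

section
/- Let P, N > 0 and ρ̃ ∈ [0,1). Then (1/4)·log₂( (2P(1+ρ̃) + N)/(N(1−ρ̃²)) ) ≤ (1/2)·log₂( (P(1−ρ̃²) + N)/(N(1−ρ̃²)) ), with equality if and only if P(1−ρ̃²) = Nρ̃. Equivalently, (P(1−ρ̃²)+N)² − N(1−ρ̃²)(2P(1+ρ̃)+N) = (P(1−ρ̃²) − Nρ̃)² ≥ 0. (In the symmetric case, the sum-rate constraint of Theorem 3 implies the individual rate constraints.) -/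
/-!
Both sides are logarithms of quotients by `D = N(1 - ρ̃²)`, so after doubling the left-hand side
the inequality says `(2P(1+ρ̃) + N)/D ≤ ((P(1-ρ̃²) + N)/D)²`, i.e. `D (2P(1+ρ̃) + N) ≤ (P(1-ρ̃²) + N)²`.
The difference of the two sides is the perfect square `(P(1-ρ̃²) - Nρ̃)²`.
-/

open Real

namespace Real

variable {b x y : ℝ}

theorem logb_le_nat_mul_logb_iff (hb : 1 < b) (hx : 0 < x) (hy : 0 < y) (n : ℕ) :
    logb b x ≤ n * logb b y ↔ x ≤ y ^ n := by
  rw [← logb_pow, logb_le_logb hb hx (pow_pos hy n)]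

theorem logb_eq_nat_mul_logb_iff (hb : 1 < b) (hx : 0 < x) (hy : 0 < y) (n : ℕ) :
    logb b x = n * logb b y ↔ x = y ^ n := by
  rw [← logb_pow]
  exact (logb_injOn_pos hb).eq_iff hx (pow_pos hy n)

end Real

section SymmetricRates

variable {a c D : ℝ}

theorem quarter_logb_div_le_half_logb_div_iff (ha : 0 < a) (hc : 0 < c) (hD : 0 < D) :
    1 / 4 * logb 2 (a / D) ≤ 1 / 2 * logb 2 (c / D) ↔ D * a ≤ c ^ 2 := by
  have hscale : 1 / 4 * logb 2 (a / D) ≤ 1 / 2 * logb 2 (c / D) ↔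
      logb 2 (a / D) ≤ (2 : ℕ) * logb 2 (c / D) := by
    push_cast
    constructor <;> intro h <;> linarith
  rw [hscale, logb_le_nat_mul_logb_iff one_lt_two (div_pos ha hD) (div_pos hc hD),
    show a / D = D * a / D ^ 2 by field_simp, div_pow,
    div_le_div_iff_of_pos_right (by positivity)]

theorem quarter_logb_div_eq_half_logb_div_iff (ha : 0 < a) (hc : 0 < c) (hD : 0 < D) :
    1 / 4 * logb 2 (a / D) = 1 / 2 * logb 2 (c / D) ↔ D * a = c ^ 2 := by
  have hscale : 1 / 4 * logb 2 (a / D) = 1 / 2 * logb 2 (c / D) ↔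
      logb 2 (a / D) = (2 : ℕ) * logb 2 (c / D) := by
    push_cast
    constructor <;> intro h <;> linarith
  rw [hscale, logb_eq_nat_mul_logb_iff one_lt_two (div_pos ha hD) (div_pos hc hD),
    show a / D = D * a / D ^ 2 by field_simp, div_pow, div_left_inj' (by positivity)]

theorem individual_sq_sub_sum_eq_sq (P N ρ : ℝ) :
    (P * (1 - ρ ^ 2) + N) ^ 2 - N * (1 - ρ ^ 2) * (2 * P * (1 + ρ) + N) =
      (P * (1 - ρ ^ 2) - N * ρ) ^ 2 := by
  ring

end SymmetricRates

/-- In the symmetric case, the sum-rate constraint of Theorem 3 implies the individual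
rate constraints: `(1/4)log₂((2P(1+ρ̃)+N)/(N(1−ρ̃²))) ≤ (1/2)log₂((P(1−ρ̃²)+N)/(N(1−ρ̃²)))`,
with equality iff `P(1−ρ̃²) = Nρ̃`; equivalently the difference of the relevant squares is
the perfect square `(P(1−ρ̃²) − Nρ̃)² ≥ 0`. -/
theorem symmetric_sum_rate_implies_individual
    (P N ρt : ℝ) (hP : 0 < P) (hN : 0 < N) (hρt : ρt ∈ Set.Ico (0:ℝ) 1) :
    (1 / 4) * Real.logb 2 ((2 * P * (1 + ρt) + N) / (N * (1 - ρt ^ 2))) ≤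
        (1 / 2) * Real.logb 2 ((P * (1 - ρt ^ 2) + N) / (N * (1 - ρt ^ 2))) ∧
      ((1 / 4) * Real.logb 2 ((2 * P * (1 + ρt) + N) / (N * (1 - ρt ^ 2))) =
          (1 / 2) * Real.logb 2 ((P * (1 - ρt ^ 2) + N) / (N * (1 - ρt ^ 2))) ↔
        P * (1 - ρt ^ 2) = N * ρt) ∧
      (P * (1 - ρt ^ 2) + N) ^ 2 - N * (1 - ρt ^ 2) * (2 * P * (1 + ρt) + N) =
        (P * (1 - ρt ^ 2) - N * ρt) ^ 2 := by
  obtain ⟨hρ0, hρ1⟩ := hρt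
  have hρ : 0 < 1 - ρt ^ 2 := by nlinarith
  have hD : 0 < N * (1 - ρt ^ 2) := mul_pos hN hρ
  have ha : 0 < 2 * P * (1 + ρt) + N := by positivity
  have hc : 0 < P * (1 - ρt ^ 2) + N := by positivity
  have key := individual_sq_sub_sum_eq_sq P N ρt
  refine ⟨(quarter_logb_div_le_half_logb_div_iff ha hc hD).2 ?_,
    (quarter_logb_div_eq_half_logb_div_iff ha hc hD).trans ?_, key⟩
  · nlinarith [sq_nonneg (P * (1 - ρt ^ 2) - N * ρt)]
  · rw [eq_comm, ← sub_eq_zero, key, sq_eq_zero_iff, sub_eq_zero]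
end

section
/- Let σ, N > 0 and ρ ∈ [0,1). There exists a function R : (0,∞) → (0,∞) such that for all sufficiently large P: (i) R(P) < (1/4)·log₂( (2P(1 + ρ(1 − 2^{−2R(P)})) + N) / (N(1 − ρ²(1 − 2^{−2R(P)})²)) ), and (ii) lim_{P→∞} √(P/N)·σ²·2^{−2R(P)}·(1 − ρ²(1 − 2^{−2R(P)}))/(1 − ρ²(1 − 2^{−2R(P)})²) = σ²·√((1−ρ)/2). (The achievable distortion of Corollary 4 matches the converse asymptotically; lower-bound part of Corollary 5.) -/
open Filter Real

private lemma coro5_core (ρ t d : ℝ) (hρ0 : 0 ≤ ρ) (hρ1 : ρ < 1) (ht0 : 0 < t)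
    (hd0 : 0 < d) (hd1 : d ≤ 1) (hkey : 5 * t < 2 * (1 - ρ^2) * d) :
    1 - ρ^2*(1-t)^2 < (1-ρ)*(1+d)^2*(1+ρ*(1-t)) + t^2 := by
  have ha : ρ*(1-ρ) ≤ 1/4 := by nlinarith [sq_nonneg (1-2*ρ)]
  have hb : (1+d)^2 ≤ 4 := by nlinarith
  have hab : ρ*(1-ρ)*(1+d)^2 ≤ 1 := by
    nlinarith [ha, hb, sq_nonneg (1+d), mul_nonneg hρ0 (by nlinarith : (0:ℝ) ≤ 1-ρ)]
  have h1 : ρ*(1-ρ)*(1+d)^2*t ≤ t := by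
    have := mul_le_mul_of_nonneg_right hab ht0.le
    linarith
  have h2 : ρ^2*t ≤ t := by nlinarith
  have h3 : (0:ℝ) ≤ (1-ρ^2)*d^2 := by nlinarith
  have h4 : (0:ℝ) ≤ ρ^2*t^2 := by positivity
  nlinarith [h1, h2, h3, h4, hkey]



set_option maxHeartbeats 1000000 in
/-- Lower-bound part of Corollary 5: there is a rate function `R(P) > 0` that eventually
satisfies the rate constraint of Corollary 4 and whose achievable distortion, scaled by
`√(P/N)`, tends to `σ²√((1−ρ)/2)` as `P → ∞`. -/
theorem achievable_distortion_asymptotics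
    (σ N ρ : ℝ) (hσ : 0 < σ) (hN : 0 < N) (hρ : ρ ∈ Set.Ico (0:ℝ) 1) :
    ∃ R : ℝ → ℝ, (∀ P : ℝ, 0 < P → 0 < R P) ∧
      (∀ᶠ P : ℝ in Filter.atTop,
        R P < (1 / 4) * Real.logb 2
          ((2 * P * (1 + ρ * (1 - (2:ℝ) ^ (-(2 * R P)))) + N) /
            (N * (1 - ρ ^ 2 * (1 - (2:ℝ) ^ (-(2 * R P))) ^ 2)))) ∧
      Filter.Tendsto
        (fun P : ℝ =>
          Real.sqrt (P / N) * σ ^ 2 * (2:ℝ) ^ (-(2 * R P)) *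
            (1 - ρ ^ 2 * (1 - (2:ℝ) ^ (-(2 * R P)))) /
              (1 - ρ ^ 2 * (1 - (2:ℝ) ^ (-(2 * R P))) ^ 2))
        Filter.atTop (nhds (σ ^ 2 * Real.sqrt ((1 - ρ) / 2))) := by
  obtain ⟨hρ0, hρ1⟩ := hρ
  have hk : 0 < 1 - ρ ^ 2 := by nlinarith
  set c0 : ℝ := Real.sqrt ((1 - ρ) / 2) with hc0
  have hc0pos : 0 < c0 := Real.sqrt_pos.2 (by linarith)
  have hc0sq : c0 ^ 2 = (1 - ρ) / 2 := Real.sq_sqrt (by linarith)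
  set c : ℝ := Real.sqrt N * c0 with hc
  have hNs : 0 < Real.sqrt N := Real.sqrt_pos.2 hN
  have hcpos : 0 < c := mul_pos hNs hc0pos
  have hcsq : c ^ 2 = N * ((1 - ρ) / 2) := by
    rw [hc, mul_pow, Real.sq_sqrt hN.le, hc0sq]
  set d : ℝ → ℝ := fun P => P ^ (-(1/4) : ℝ) with hd
  set t : ℝ → ℝ := fun P => c * (1 + d P) * P ^ (-(1/2) : ℝ) with ht
  set s : ℝ → ℝ := fun P => min (t P) (1/2) with hs
  have htpos : ∀ P : ℝ, 0 < P → 0 < t P := by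
    intro P hP
    have h1 : 0 < d P := Real.rpow_pos_of_pos hP _
    have h2 : 0 < P ^ (-(1/2) : ℝ) := Real.rpow_pos_of_pos hP _
    have : 0 < c * (1 + d P) * P ^ (-(1/2) : ℝ) := by positivity
    simpa [ht] using this
  have hspos : ∀ P : ℝ, 0 < P → 0 < s P := by
    intro P hP
    exact lt_min (htpos P hP) (by norm_num)
  have hslt1 : ∀ P : ℝ, s P < 1 :=
    fun P => lt_of_le_of_lt (min_le_right _ _) (by norm_num)
  -- the exponential of the rate
  have hpow : ∀ P : ℝ, 0 < P →
      (2:ℝ) ^ (-(2 * (-(1/2) * Real.logb 2 (s P)))) = s P := by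
    intro P hP
    have h1 : -(2 * (-(1/2) * Real.logb 2 (s P))) = Real.logb 2 (s P) := by ring
    rw [h1, Real.rpow_logb (by norm_num) (by norm_num) (hspos P hP)]
  -- limits
  have hd0 : Tendsto d atTop (nhds 0) := by
    simpa [hd] using tendsto_rpow_neg_atTop (by norm_num : (0:ℝ) < 1/4)
  have hhalf : Tendsto (fun P : ℝ => P ^ (-(1/2) : ℝ)) atTop (nhds 0) :=
    tendsto_rpow_neg_atTop (by norm_num)
  have ht0 : Tendsto t atTop (nhds 0) := by
    have := (tendsto_const_nhds : Tendsto (fun _ : ℝ => c) atTop (nhds c)).mul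
      ((tendsto_const_nhds : Tendsto (fun _ : ℝ => (1:ℝ)) atTop (nhds 1)).add hd0) |>.mul hhalf
    simpa [ht] using this
  -- eventual facts
  have hevP : ∀ᶠ P : ℝ in atTop, 0 < P := eventually_gt_atTop 0
  have hev1 : ∀ᶠ P : ℝ in atTop, 1 ≤ P := eventually_ge_atTop 1
  have hevsmall : ∀ᶠ P : ℝ in atTop, t P ≤ 1/2 :=
    ht0.eventually_le_const (by norm_num : (0:ℝ) < 1/2)
  have hevratio : ∀ᶠ P : ℝ in atTop, 5 * t P < 2 * (1 - ρ ^ 2) * d P := by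
    have hu : Tendsto (fun P : ℝ => 5 * (c * (1 + d P) * d P)) atTop (nhds 0) := by
      have := (tendsto_const_nhds : Tendsto (fun _ : ℝ => (5:ℝ)) atTop (nhds 5)).mul
        (((tendsto_const_nhds : Tendsto (fun _ : ℝ => c) atTop (nhds c)).mul
          ((tendsto_const_nhds : Tendsto (fun _ : ℝ => (1:ℝ)) atTop (nhds 1)).add hd0)).mul hd0)
      simpa using this
    filter_upwards [hu.eventually_lt_const (by positivity : (0:ℝ) < 2 * (1 - ρ^2)),
      hevP] with P hu' hP
    have hdpos : 0 < d P := Real.rpow_pos_of_pos hP _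
    have hsplit : t P = (c * (1 + d P) * d P) * d P := by
      have : P ^ (-(1/2) : ℝ) = P ^ (-(1/4) : ℝ) * P ^ (-(1/4) : ℝ) := by
        rw [← Real.rpow_add hP]; norm_num
      simp only [ht, hd, this]; ring
    rw [hsplit]
    calc 5 * (c * (1 + d P) * d P * d P) = (5 * (c * (1 + d P) * d P)) * d P := by ring
      _ < (2 * (1 - ρ^2)) * d P := by
          exact mul_lt_mul_of_pos_right hu' hdpos
      _ = 2 * (1 - ρ^2) * d P := by ring
  refine ⟨fun P => -(1/2) * Real.logb 2 (s P), ?_, ?_, ?_⟩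
  · intro P hP
    have := Real.logb_neg (b := 2) (by norm_num) (hspos P hP) (hslt1 P)
    linarith
  · -- rate constraint eventually
    filter_upwards [hevP, hev1, hevsmall, hevratio] with P hP hP1 hle hrat
    have hsP : s P = t P := min_eq_left hle
    have hpowP : (2:ℝ) ^ (-(2 * (-(1/2) * Real.logb 2 (s P)))) = t P := by
      rw [hpow P hP, hsP]
    rw [hpowP]
    have htP := htpos P hP
    have hdpos : 0 < d P := Real.rpow_pos_of_pos hP _
    have hd1 : d P ≤ 1 := Real.rpow_le_one_of_one_le_of_nonpos hP1 (by norm_num)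
    -- identity 2 P t² = N (1-ρ)(1+d)²
    have e1 : (P ^ (-(1/2) : ℝ))^2 = P⁻¹ := by
      rw [sq, ← Real.rpow_add hP]
      norm_num [Real.rpow_neg_one]
    have hid : 2 * P * t P ^ 2 = N * (1 - ρ) * (1 + d P) ^ 2 := by
      have e2 : t P ^ 2 = c ^ 2 * (1 + d P) ^ 2 * P⁻¹ := by
        simp only [ht]
        rw [mul_pow, mul_pow, e1]
      rw [e2, hcsq]
      field_simp
    have hcore := coro5_core ρ (t P) (d P) hρ0 hρ1 htP hdpos hd1 hrat
    have hlt : N * (1 - ρ^2 * (1 - t P)^2) < (2 * P * (1 + ρ * (1 - t P)) + N) * t P ^ 2 := by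
      have h5 := mul_lt_mul_of_pos_left hcore hN
      calc N * (1 - ρ^2 * (1 - t P)^2)
          < N * ((1-ρ)*(1+d P)^2*(1+ρ*(1-t P)) + t P^2) := h5
        _ = (2 * P * (1 + ρ * (1 - t P)) + N) * t P ^ 2 := by
            linear_combination (-(1 + ρ*(1 - t P))) * hid
    have hDen : 0 < N * (1 - ρ^2 * (1 - t P)^2) := by
      have h6 : (1 - t P)^2 ≤ 1 := by nlinarith
      have h7 : ρ^2 * (1 - t P)^2 ≤ ρ^2 := by nlinarith [sq_nonneg ρ]
      have h8 : ρ^2 * (1 - t P)^2 < 1 := by nlinarith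
      nlinarith
    have hNum : 0 < 2 * P * (1 + ρ * (1 - t P)) + N := by nlinarith
    have hR : -(1/2) * Real.logb 2 (s P) = (1/4) * Real.logb 2 ((t P ^ 2)⁻¹) := by
      rw [hsP, Real.logb_inv, Real.logb_pow]
      push_cast
      ring
    rw [hR]
    have hlt' : (t P ^ 2)⁻¹ < (2 * P * (1 + ρ * (1 - t P)) + N) / (N * (1 - ρ^2 * (1 - t P)^2)) := by
      rw [inv_eq_one_div]
      rw [div_lt_div_iff₀ (by positivity) hDen]
      linarith
    have := Real.logb_lt_logb (b := 2) (by norm_num) (by positivity) hlt'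
    linarith
  · -- tendsto
    have hA : Tendsto (fun P : ℝ => 1 - ρ^2 * (1 - t P)) atTop (nhds (1 - ρ^2)) := by
      have := (tendsto_const_nhds : Tendsto (fun _ : ℝ => (1:ℝ)) atTop (nhds 1)).sub
        ((tendsto_const_nhds : Tendsto (fun _ : ℝ => ρ^2) atTop (nhds (ρ^2))).mul ((tendsto_const_nhds : Tendsto (fun _ : ℝ => (1:ℝ)) atTop (nhds 1)).sub ht0))
      simpa using this
    have hB : Tendsto (fun P : ℝ => 1 - ρ^2 * (1 - t P)^2) atTop (nhds (1 - ρ^2)) := by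
      have := (tendsto_const_nhds : Tendsto (fun _ : ℝ => (1:ℝ)) atTop (nhds 1)).sub
        ((tendsto_const_nhds : Tendsto (fun _ : ℝ => ρ^2) atTop (nhds (ρ^2))).mul
          (((tendsto_const_nhds : Tendsto (fun _ : ℝ => (1:ℝ)) atTop (nhds 1)).sub ht0).pow 2))
      simpa using this
    have hG : Tendsto (fun P : ℝ => σ^2 * c0 * (1 + d P) * (1 - ρ^2 * (1 - t P))
        / (1 - ρ^2 * (1 - t P)^2)) atTop (nhds (σ^2 * c0)) := by
      have h9 := (((tendsto_const_nhds : Tendsto (fun _ : ℝ => σ^2 * c0) atTop (nhds (σ^2 * c0))).mul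
        ((tendsto_const_nhds : Tendsto (fun _ : ℝ => (1:ℝ)) atTop (nhds 1)).add hd0)).mul hA).div hB hk.ne'
      have heq : σ^2 * c0 * (1 + 0) * (1 - ρ^2) / (1 - ρ^2) = σ^2 * c0 := by
        field_simp
        simp
      rw [heq] at h9
      exact h9
    refine hG.congr' ?_
    filter_upwards [hevP, hevsmall] with P hP hle
    have hsP : s P = t P := min_eq_left hle
    have hpowP : (2:ℝ) ^ (-(2 * (-(1/2) * Real.logb 2 (s P)))) = t P := by
      rw [hpow P hP, hsP]
    rw [hpowP]
    have h1 : Real.sqrt P * P ^ (-(1/2) : ℝ) = 1 := by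
      rw [Real.sqrt_eq_rpow, ← Real.rpow_add hP]
      norm_num
    have hkeyeq : Real.sqrt (P / N) * t P = c0 * (1 + d P) := by
      have h2 : Real.sqrt (P / N) * t P
          = (Real.sqrt P * P ^ (-(1/2) : ℝ)) * c0 * (1 + d P) * (Real.sqrt N / Real.sqrt N) := by
        rw [Real.sqrt_div hP.le]
        simp only [ht, hc]
        ring
      rw [h2, h1, div_self hNs.ne']
      ring
    have hnum : σ^2 * c0 * (1 + d P) * (1 - ρ^2 * (1 - t P))
        = Real.sqrt (P / N) * σ^2 * t P * (1 - ρ^2 * (1 - t P)) := by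
      linear_combination σ^2 * (1 - ρ^2 * (1 - t P)) * hkeyeq.symm
    rw [hnum]
end

section
/- Let σ > 0, ρ ∈ [0,1), and let Σ_S be the 2×2 matrix [[σ², ρσ²],[ρσ², σ²]]. Suppose 0 < D₁ ≤ σ²(1−ρ) and 0 < D₂ ≤ (σ²(1−ρ²) − D₁)·σ²/(σ² − D₁). Consider all real positive semidefinite 4×4 matrices K, written in 2×2 blocks K = [[Σ, B],[Bᵀ, C]], whose upper-left block Σ equals Σ_S and which satisfy K₁₁ − 2K₁₃ + K₃₃ ≤ D₁ and K₂₂ − 2K₂₄ + K₄₄ ≤ D₂. Then the maximum over all such K of det(Σ_S − B·C⁺·Bᵀ), where C⁺ is the Moore–Penrose pseudoinverse of C, equals D₁·D₂, and the maximum is attained. (Covariance-matrix optimization underlying the low-distortion regime of the bivariate Gaussian rate-distortion function R(D₁,D₂) in Theorem 1.) -/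
set_option maxHeartbeats 1000000

open Matrix

lemma quad_lin (A B : ℝ) (hA : 0 < A) (h : ∀ t : ℝ, 0 ≤ A*t^2 + 2*B*t) : B = 0 := by
  have h1 := h (-B/A)
  have hne : A ≠ 0 := hA.ne'
  have h2 : A*(-B/A)^2 + 2*B*(-B/A) = -(B^2)/A := by field_simp; ring
  rw [h2] at h1
  have h3 : 0 ≤ -(B^2) := by
    have := mul_nonneg h1 hA.le
    rwa [div_mul_cancel₀ _ hne] at this
  have h4 : B^2 = 0 := le_antisymm (by linarith) (sq_nonneg B)
  exact pow_eq_zero_iff two_ne_zero |>.mp h4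


lemma pinv_unique {n : ℕ} (A X Y : Matrix (Fin n) (Fin n) ℝ)
    (hX1 : A*X*A = A) (hX2 : X*A*X = X) (hX3 : (A*X)ᵀ = A*X) (hX4 : (X*A)ᵀ = X*A)
    (hY1 : A*Y*A = A) (hY2 : Y*A*Y = Y) (hY3 : (A*Y)ᵀ = A*Y) (hY4 : (Y*A)ᵀ = Y*A) :
    X = Y := by
  have hAt : Aᵀ = Aᵀ*(Yᵀ*Aᵀ) := by
    calc Aᵀ = (A*Y*A)ᵀ := by rw [hY1]
    _ = Aᵀ*(Yᵀ*Aᵀ) := by simp [Matrix.transpose_mul, Matrix.mul_assoc]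
  have hAt' : Aᵀ = (Aᵀ*Yᵀ)*Aᵀ := by rw [← Matrix.mul_assoc] at hAt; exact hAt
  have hAXY : A*X = A*Y := by
    calc A*X = (A*X)ᵀ := hX3.symm
    _ = Xᵀ*Aᵀ := Matrix.transpose_mul A X
    _ = Xᵀ*(Aᵀ*(Yᵀ*Aᵀ)) := by rw [← hAt]
    _ = (Xᵀ*Aᵀ)*(Yᵀ*Aᵀ) := by noncomm_ring
    _ = (A*X)ᵀ*(A*Y)ᵀ := by rw [Matrix.transpose_mul, Matrix.transpose_mul]
    _ = (A*X)*(A*Y) := by rw [hX3, hY3]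
    _ = (A*X*A)*Y := by noncomm_ring
    _ = A*Y := by rw [hX1]
  have hXYA : X*A = Y*A := by
    calc X*A = (X*A)ᵀ := hX4.symm
    _ = Aᵀ*Xᵀ := Matrix.transpose_mul X A
    _ = ((Aᵀ*Yᵀ)*Aᵀ)*Xᵀ := by rw [← hAt']
    _ = (Aᵀ*Yᵀ)*(Aᵀ*Xᵀ) := by noncomm_ring
    _ = (Y*A)ᵀ*(X*A)ᵀ := by rw [Matrix.transpose_mul, Matrix.transpose_mul]
    _ = (Y*A)*(X*A) := by rw [hX4, hY4]
    _ = Y*(A*X*A) := by noncomm_ring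
    _ = Y*A := by rw [hX1]
  calc X = X*A*X := hX2.symm
  _ = X*(A*Y) := by rw [Matrix.mul_assoc, hAXY]
  _ = (Y*A)*Y := by rw [← Matrix.mul_assoc, hXYA]
  _ = Y := hY2

lemma pinv_symm {n : ℕ} (C P : Matrix (Fin n) (Fin n) ℝ) (hC : Cᵀ = C)
    (h1 : C*P*C = C) (h2 : P*C*P = P) (h3 : (C*P)ᵀ = C*P) (h4 : (P*C)ᵀ = P*C) :
    Pᵀ = P := by
  have e1 : C*Pᵀ = P*C := by rw [← hC, ← Matrix.transpose_mul, h4, hC]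
  have e2 : Pᵀ*C = C*P := by rw [← hC, ← Matrix.transpose_mul, h3, hC]
  refine pinv_unique C Pᵀ P ?_ ?_ ?_ ?_ h1 h2 h3 h4
  · calc C*Pᵀ*C = Cᵀ*(Pᵀ*Cᵀ) := by rw [hC, Matrix.mul_assoc]
    _ = (C*P*C)ᵀ := by simp [Matrix.transpose_mul, Matrix.mul_assoc]
    _ = C := by rw [h1, hC]
  · calc Pᵀ*C*Pᵀ = Pᵀ*(Cᵀ*Pᵀ) := by rw [hC, Matrix.mul_assoc]
    _ = (P*C*P)ᵀ := by simp [Matrix.transpose_mul, Matrix.mul_assoc]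
    _ = Pᵀ := by rw [h2]
  · rw [e1, h4]
  · rw [e2, h3]

lemma exists_pinv (a b c : ℝ) (ha : 0 < a) (hd : 0 ≤ a*c - b^2) :
    ∃ P : Matrix (Fin 2) (Fin 2) ℝ,
      !![a,b;b,c] * P * !![a,b;b,c] = !![a,b;b,c] ∧
      P * !![a,b;b,c] * P = P ∧
      (!![a,b;b,c] * P)ᵀ = !![a,b;b,c] * P ∧
      (P * !![a,b;b,c])ᵀ = P * !![a,b;b,c] := by
  set C : Matrix (Fin 2) (Fin 2) ℝ := !![a,b;b,c] with hCdef
  have hCt : Cᵀ = C := by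
    ext i j; fin_cases i <;> fin_cases j <;> simp [hCdef]
  rcases eq_or_ne (a*c - b^2) 0 with h0 | h0
  · have hc : 0 ≤ c := by nlinarith
    have ht : 0 < a + c := by linarith
    have hCC : C*C = (a+c) • C := by
      ext i j
      fin_cases i <;> fin_cases j <;>
        simp [hCdef, Matrix.mul_apply, Fin.sum_univ_two, Matrix.smul_apply] <;>
        first
        | linear_combination h0
        | linear_combination (-1 : ℝ)*h0
        | ring
    set P : Matrix (Fin 2) (Fin 2) ℝ := ((a+c)^2)⁻¹ • C with hPdef
    have hCP : C*P = (a+c)⁻¹ • C := by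
      rw [hPdef, Matrix.mul_smul, hCC, smul_smul]
      congr 1
      field_simp
    have hPC : P*C = (a+c)⁻¹ • C := by
      rw [hPdef, Matrix.smul_mul, hCC, smul_smul]
      congr 1
      field_simp
    refine ⟨P, ?_, ?_, ?_, ?_⟩
    · rw [hCP, Matrix.smul_mul, hCC, smul_smul]
      rw [inv_mul_cancel₀ ht.ne']
      simp
    · rw [Matrix.mul_assoc, hCP, Matrix.mul_smul, hPC, smul_smul, hPdef]
      congr 1
      field_simp
    · rw [hCP, Matrix.transpose_smul, hCt]
    · rw [hPC, Matrix.transpose_smul, hCt]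
  · have hu : IsUnit C.det := by
      have hdet : C.det = a*c - b*b := by simp [hCdef, Matrix.det_fin_two_of]
      rw [hdet]; exact isUnit_iff_ne_zero.2 (by intro h; apply h0; nlinarith)
    refine ⟨C⁻¹, ?_, ?_, ?_, ?_⟩
    · rw [Matrix.mul_nonsing_inv C hu, Matrix.one_mul]
    · rw [Matrix.mul_assoc, Matrix.mul_nonsing_inv C hu, Matrix.mul_one]
    · rw [Matrix.mul_nonsing_inv C hu]; simp
    · rw [Matrix.nonsing_inv_mul C hu]; simp

/-- Covariance-matrix optimization underlying the low-distortion regime of the bivariate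
Gaussian rate-distortion function `R(D₁,D₂)` of Theorem 1: among all PSD joint covariance
matrices `K = [[Σ_S, B],[Bᵀ, C]]` of `(S₁,S₂,Ŝ₁,Ŝ₂)` with fixed source block `Σ_S` and
mean squared errors at most `D₁, D₂`, the maximum of `det(Σ_S − B C⁺ Bᵀ)` (with `C⁺` the
Moore–Penrose pseudoinverse, characterized by the four Penrose equations) equals
`D₁·D₂`, and it is attained. -/
theorem rate_distortion_covariance_optimization_low
    (σ ρ D₁ D₂ : ℝ) (hσ : 0 < σ) (hρ : ρ ∈ Set.Ico (0:ℝ) 1)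
    (hD₁ : 0 < D₁) (hD₁' : D₁ ≤ σ ^ 2 * (1 - ρ))
    (hD₂ : 0 < D₂)
    (hD₂' : D₂ ≤ (σ ^ 2 * (1 - ρ ^ 2) - D₁) * σ ^ 2 / (σ ^ 2 - D₁)) :
    IsGreatest
      {v : ℝ | ∃ (K : Matrix (Fin 4) (Fin 4) ℝ) (Cp : Matrix (Fin 2) (Fin 2) ℝ),
        K.PosSemidef ∧
        K 0 0 = σ ^ 2 ∧ K 0 1 = ρ * σ ^ 2 ∧ K 1 0 = ρ * σ ^ 2 ∧ K 1 1 = σ ^ 2 ∧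
        K 0 0 - 2 * K 0 2 + K 2 2 ≤ D₁ ∧
        K 1 1 - 2 * K 1 3 + K 3 3 ≤ D₂ ∧
        (!![K 2 2, K 2 3; K 3 2, K 3 3] * Cp * !![K 2 2, K 2 3; K 3 2, K 3 3] =
            !![K 2 2, K 2 3; K 3 2, K 3 3]) ∧
        (Cp * !![K 2 2, K 2 3; K 3 2, K 3 3] * Cp = Cp) ∧
        ((!![K 2 2, K 2 3; K 3 2, K 3 3] * Cp)ᵀ = !![K 2 2, K 2 3; K 3 2, K 3 3] * Cp) ∧
        ((Cp * !![K 2 2, K 2 3; K 3 2, K 3 3])ᵀ = Cp * !![K 2 2, K 2 3; K 3 2, K 3 3]) ∧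
        v = (!![σ ^ 2, ρ * σ ^ 2; ρ * σ ^ 2, σ ^ 2] -
              !![K 0 2, K 0 3; K 1 2, K 1 3] * Cp *
                (!![K 0 2, K 0 3; K 1 2, K 1 3])ᵀ).det}
      (D₁ * D₂) := by
  constructor
  · obtain ⟨hρ0, hρ1⟩ := hρ
    have hσ2 : 0 < σ ^ 2 := by positivity
    have hD1le : D₁ ≤ σ ^ 2 := by nlinarith
    have ha : 0 < σ ^ 2 - D₁ := by
      rcases eq_or_lt_of_le hD1le with heq | hlt
      · exfalso
        rw [show σ ^ 2 - D₁ = (0:ℝ) by rw [← heq]; ring, div_zero] at hD₂'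
        linarith
      · linarith
    set a : ℝ := σ ^ 2 - D₁ with hadef
    set b : ℝ := ρ * σ ^ 2 with hbdef
    set c : ℝ := σ ^ 2 - D₂ with hcdef
    have hN : D₂ * a ≤ (σ ^ 2 * (1 - ρ ^ 2) - D₁) * σ ^ 2 := by
      rw [le_div_iff₀ ha] at hD₂'
      exact hD₂'
    have hdet : 0 ≤ a * c - b ^ 2 := by
      rw [hadef, hbdef, hcdef]; nlinarith
    obtain ⟨P, hp1, hp2, hp3, hp4⟩ := exists_pinv a b c ha hdet
    refine ⟨!![σ^2, b, a, b; b, σ^2, b, c; a, b, a, b; b, c, b, c], P, ?_, ?_, ?_, ?_, ?_, ?_, ?_, ?_, ?_, ?_, ?_, ?_⟩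
    · refine Matrix.PosSemidef.of_dotProduct_mulVec_nonneg ?_ ?_
      · ext i j
        fin_cases i <;> fin_cases j <;> simp [Matrix.conjTranspose_apply]
      · intro x
        have h1 : 0 ≤ a * ((x 0 + x 2)^2 * a + 2 * (x 0 + x 2) * (x 1 + x 3) * b + (x 1 + x 3)^2 * c) := by
          nlinarith [sq_nonneg (a * (x 0 + x 2) + b * (x 1 + x 3)), mul_nonneg hdet (sq_nonneg (x 1 + x 3))]
        have h2 : 0 ≤ (x 0 + x 2)^2 * a + 2 * (x 0 + x 2) * (x 1 + x 3) * b + (x 1 + x 3)^2 * c :=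
          nonneg_of_mul_nonneg_right (by linarith) ha
        norm_num [dotProduct, Matrix.mulVec, Fin.sum_univ_four, Matrix.cons_val_two, Matrix.cons_val_three, Matrix.tail_cons]
        nlinarith [h2, mul_nonneg hD₁.le (sq_nonneg (x 0)), mul_nonneg hD₂.le (sq_nonneg (x 1))]
    · rfl
    · rfl
    · rfl
    · rfl
    · norm_num [Matrix.cons_val_two, Matrix.cons_val_three, Matrix.tail_cons]; linarith
    · norm_num [Matrix.cons_val_two, Matrix.cons_val_three, Matrix.tail_cons]; linarith
    · exact hp1
    · exact hp2
    · exact hp3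
    · exact hp4
    · have hBt : (!![a,b;b,c] : Matrix (Fin 2) (Fin 2) ℝ)ᵀ = !![a,b;b,c] := by
        ext i j; fin_cases i <;> fin_cases j <;> simp
      show D₁ * D₂ =
        (!![σ^2, ρ*σ^2; ρ*σ^2, σ^2] - !![a,b;b,c] * P * (!![a,b;b,c])ᵀ).det
      rw [hBt, hp1]
      norm_num [Matrix.det_fin_two, Matrix.sub_apply]
      rw [hadef, hcdef]
      ring
  · rintro v ⟨K, Cp, hK, e00, e01, e10, e11, hm1, hm2, p1, p2, p3, p4, hv⟩
    have hσ2 : (0:ℝ) < σ^2 := by positivity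
    have hsym : ∀ i j : Fin 4, K j i = K i j := fun i j => by
      simpa using hK.1.apply i j
    have hc32 : K 3 2 = K 2 3 := hsym 2 3
    rw [hc32] at p1 p2 p3 p4
    have hCt : (!![K 2 2, K 2 3; K 2 3, K 3 3])ᵀ = !![K 2 2, K 2 3; K 2 3, K 3 3] := by
      ext i j; fin_cases i <;> fin_cases j <;> rfl
    have hPt : Cpᵀ = Cp := pinv_symm _ Cp hCt p1 p2 p3 p4
    have hp10 : Cp 1 0 = Cp 0 1 := by
      have := congrFun (congrFun hPt 0) 1
      simpa using this
    have hCp : Cp = !![Cp 0 0, Cp 0 1; Cp 0 1, Cp 1 1] := by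
      ext i j; fin_cases i <;> fin_cases j <;> simp [hp10]
    rw [hCp] at p1 p2 hv
    have master : ∀ u0 u1 w0 w1 : ℝ, 0 ≤ σ^2*u0^2 + σ^2*u1^2 + 2*(ρ*σ^2)*(u0*u1)
        + 2*(u0*(K 0 2*w0 + K 0 3*w1) + u1*(K 1 2*w0 + K 1 3*w1))
        + (K 2 2*w0^2 + 2*(K 2 3)*(w0*w1) + K 3 3*w1^2) := by
      intro u0 u1 w0 w1
      have h := hK.dotProduct_mulVec_nonneg ![u0,u1,w0,w1]
      simp only [dotProduct, Matrix.mulVec, Fin.sum_univ_four, star_trivial, Pi.star_apply,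
        Matrix.cons_val_zero, Matrix.cons_val_one, Matrix.head_cons, Matrix.cons_val_two,
        Matrix.cons_val_three, Matrix.tail_cons] at h
      rw [e00, e01, e10, e11, hsym 0 2, hsym 0 3, hsym 1 2, hsym 1 3, hc32] at h
      exact h.trans_eq (by ring)
    have g100 := congrFun (congrFun p1 0) 0
    have g101 := congrFun (congrFun p1 0) 1
    have g110 := congrFun (congrFun p1 1) 0
    have g111 := congrFun (congrFun p1 1) 1
    simp only [Matrix.mul_apply, Fin.sum_univ_two, Matrix.cons_val', Matrix.cons_val_zero, Matrix.cons_val_one, Matrix.head_cons, Matrix.empty_val', Matrix.cons_val_fin_one, Matrix.head_fin_const, Matrix.of_apply] at g100 g101 g110 g111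
    have g200 := congrFun (congrFun p2 0) 0
    have g201 := congrFun (congrFun p2 0) 1
    have g210 := congrFun (congrFun p2 1) 0
    have g211 := congrFun (congrFun p2 1) 1
    simp only [Matrix.mul_apply, Fin.sum_univ_two, Matrix.cons_val', Matrix.cons_val_zero, Matrix.cons_val_one, Matrix.head_cons, Matrix.empty_val', Matrix.cons_val_fin_one, Matrix.head_fin_const, Matrix.of_apply] at g200 g201 g210 g211
    have hz00 : K 2 2 * (1 - (Cp 0 0 * K 2 2 + Cp 0 1 * K 2 3)) + K 2 3 * (0 - (Cp 0 1 * K 2 2 + Cp 1 1 * K 2 3)) = 0 := by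
      first | linear_combination -g100 | linear_combination g100
    have hz01 : K 2 2 * (0 - (Cp 0 0 * K 2 3 + Cp 0 1 * K 3 3)) + K 2 3 * (1 - (Cp 0 1 * K 2 3 + Cp 1 1 * K 3 3)) = 0 := by
      first | linear_combination -g101 | linear_combination g101
    have hz10 : K 2 3 * (1 - (Cp 0 0 * K 2 2 + Cp 0 1 * K 2 3)) + K 3 3 * (0 - (Cp 0 1 * K 2 2 + Cp 1 1 * K 2 3)) = 0 := by
      first | linear_combination -g110 | linear_combination g110
    have hz11 : K 2 3 * (0 - (Cp 0 0 * K 2 3 + Cp 0 1 * K 3 3)) + K 3 3 * (1 - (Cp 0 1 * K 2 3 + Cp 1 1 * K 3 3)) = 0 := by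
      first | linear_combination -g111 | linear_combination g111
    have hr00 : K 0 2 * (1 - (Cp 0 0 * K 2 2 + Cp 0 1 * K 2 3)) + K 0 3 * (0 - (Cp 0 1 * K 2 2 + Cp 1 1 * K 2 3)) = 0 := by
      refine quad_lin (σ^2) _ hσ2 (fun t => ?_)
      have h := master t 0 (1 - (Cp 0 0 * K 2 2 + Cp 0 1 * K 2 3)) (0 - (Cp 0 1 * K 2 2 + Cp 1 1 * K 2 3))
      have a0 : (1 - (Cp 0 0 * K 2 2 + Cp 0 1 * K 2 3)) * (K 2 2 * (1 - (Cp 0 0 * K 2 2 + Cp 0 1 * K 2 3)) + K 2 3 * (0 - (Cp 0 1 * K 2 2 + Cp 1 1 * K 2 3))) = 0 := by rw [hz00]; ring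
      have a1 : (0 - (Cp 0 1 * K 2 2 + Cp 1 1 * K 2 3)) * (K 2 3 * (1 - (Cp 0 0 * K 2 2 + Cp 0 1 * K 2 3)) + K 3 3 * (0 - (Cp 0 1 * K 2 2 + Cp 1 1 * K 2 3))) = 0 := by rw [hz10]; ring
      linarith [h, a0, a1]
    have hr01 : K 0 2 * (0 - (Cp 0 0 * K 2 3 + Cp 0 1 * K 3 3)) + K 0 3 * (1 - (Cp 0 1 * K 2 3 + Cp 1 1 * K 3 3)) = 0 := by
      refine quad_lin (σ^2) _ hσ2 (fun t => ?_)
      have h := master t 0 (0 - (Cp 0 0 * K 2 3 + Cp 0 1 * K 3 3)) (1 - (Cp 0 1 * K 2 3 + Cp 1 1 * K 3 3))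
      have a0 : (0 - (Cp 0 0 * K 2 3 + Cp 0 1 * K 3 3)) * (K 2 2 * (0 - (Cp 0 0 * K 2 3 + Cp 0 1 * K 3 3)) + K 2 3 * (1 - (Cp 0 1 * K 2 3 + Cp 1 1 * K 3 3))) = 0 := by rw [hz01]; ring
      have a1 : (1 - (Cp 0 1 * K 2 3 + Cp 1 1 * K 3 3)) * (K 2 3 * (0 - (Cp 0 0 * K 2 3 + Cp 0 1 * K 3 3)) + K 3 3 * (1 - (Cp 0 1 * K 2 3 + Cp 1 1 * K 3 3))) = 0 := by rw [hz11]; ring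
      linarith [h, a0, a1]
    have hr10 : K 1 2 * (1 - (Cp 0 0 * K 2 2 + Cp 0 1 * K 2 3)) + K 1 3 * (0 - (Cp 0 1 * K 2 2 + Cp 1 1 * K 2 3)) = 0 := by
      refine quad_lin (σ^2) _ hσ2 (fun t => ?_)
      have h := master 0 t (1 - (Cp 0 0 * K 2 2 + Cp 0 1 * K 2 3)) (0 - (Cp 0 1 * K 2 2 + Cp 1 1 * K 2 3))
      have a0 : (1 - (Cp 0 0 * K 2 2 + Cp 0 1 * K 2 3)) * (K 2 2 * (1 - (Cp 0 0 * K 2 2 + Cp 0 1 * K 2 3)) + K 2 3 * (0 - (Cp 0 1 * K 2 2 + Cp 1 1 * K 2 3))) = 0 := by rw [hz00]; ring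
      have a1 : (0 - (Cp 0 1 * K 2 2 + Cp 1 1 * K 2 3)) * (K 2 3 * (1 - (Cp 0 0 * K 2 2 + Cp 0 1 * K 2 3)) + K 3 3 * (0 - (Cp 0 1 * K 2 2 + Cp 1 1 * K 2 3))) = 0 := by rw [hz10]; ring
      linarith [h, a0, a1]
    have hr11 : K 1 2 * (0 - (Cp 0 0 * K 2 3 + Cp 0 1 * K 3 3)) + K 1 3 * (1 - (Cp 0 1 * K 2 3 + Cp 1 1 * K 3 3)) = 0 := by
      refine quad_lin (σ^2) _ hσ2 (fun t => ?_)
      have h := master 0 t (0 - (Cp 0 0 * K 2 3 + Cp 0 1 * K 3 3)) (1 - (Cp 0 1 * K 2 3 + Cp 1 1 * K 3 3))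
      have a0 : (0 - (Cp 0 0 * K 2 3 + Cp 0 1 * K 3 3)) * (K 2 2 * (0 - (Cp 0 0 * K 2 3 + Cp 0 1 * K 3 3)) + K 2 3 * (1 - (Cp 0 1 * K 2 3 + Cp 1 1 * K 3 3))) = 0 := by rw [hz01]; ring
      have a1 : (1 - (Cp 0 1 * K 2 3 + Cp 1 1 * K 3 3)) * (K 2 3 * (0 - (Cp 0 0 * K 2 3 + Cp 0 1 * K 3 3)) + K 3 3 * (1 - (Cp 0 1 * K 2 3 + Cp 1 1 * K 3 3))) = 0 := by rw [hz11]; ring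
      linarith [h, a0, a1]
    have hT2_0 : K 2 2 * (-(Cp 0 0 * K 0 2 + Cp 0 1 * K 0 3))^2 + 2 * K 2 3 * ((-(Cp 0 0 * K 0 2 + Cp 0 1 * K 0 3)) * (-(Cp 0 1 * K 0 2 + Cp 1 1 * K 0 3))) + K 3 3 * (-(Cp 0 1 * K 0 2 + Cp 1 1 * K 0 3))^2 = (K 0 2 * (Cp 0 0 * K 0 2 + Cp 0 1 * K 0 3) + K 0 3 * (Cp 0 1 * K 0 2 + Cp 1 1 * K 0 3)) := by
      linear_combination (K 0 2)^2 * g200 + (2*(K 0 2)*(K 0 3)) * g201 + (K 0 3)^2 * g211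
    have f1_0 : 0 ≤ σ^2 - (K 0 2 * (Cp 0 0 * K 0 2 + Cp 0 1 * K 0 3) + K 0 3 * (Cp 0 1 * K 0 2 + Cp 1 1 * K 0 3)) := by
      have h := master 1 0 (-(Cp 0 0 * K 0 2 + Cp 0 1 * K 0 3)) (-(Cp 0 1 * K 0 2 + Cp 1 1 * K 0 3))
      linarith [h, hT2_0]
    have hT3_0 : K 2 2 * (1 - (Cp 0 0 * K 0 2 + Cp 0 1 * K 0 3))^2 + 2 * K 2 3 * ((1 - (Cp 0 0 * K 0 2 + Cp 0 1 * K 0 3)) * (0 - (Cp 0 1 * K 0 2 + Cp 1 1 * K 0 3))) + K 3 3 * (0 - (Cp 0 1 * K 0 2 + Cp 1 1 * K 0 3))^2 = K 2 2 - 2 * K 0 2 + (K 0 2 * (Cp 0 0 * K 0 2 + Cp 0 1 * K 0 3) + K 0 3 * (Cp 0 1 * K 0 2 + Cp 1 1 * K 0 3)) := by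
      linear_combination 2 * hr00 + (K 0 2)^2 * g200 + (2*(K 0 2)*(K 0 3)) * g201 + (K 0 3)^2 * g211
    have f2_0 : σ^2 - (K 0 2 * (Cp 0 0 * K 0 2 + Cp 0 1 * K 0 3) + K 0 3 * (Cp 0 1 * K 0 2 + Cp 1 1 * K 0 3)) ≤ D₁ := by
      have h := master 0 0 (1 - (Cp 0 0 * K 0 2 + Cp 0 1 * K 0 3)) (0 - (Cp 0 1 * K 0 2 + Cp 1 1 * K 0 3))
      linarith [h, hT3_0, hm1, e00]
    have hT2_1 : K 2 2 * (-(Cp 0 0 * K 1 2 + Cp 0 1 * K 1 3))^2 + 2 * K 2 3 * ((-(Cp 0 0 * K 1 2 + Cp 0 1 * K 1 3)) * (-(Cp 0 1 * K 1 2 + Cp 1 1 * K 1 3))) + K 3 3 * (-(Cp 0 1 * K 1 2 + Cp 1 1 * K 1 3))^2 = (K 1 2 * (Cp 0 0 * K 1 2 + Cp 0 1 * K 1 3) + K 1 3 * (Cp 0 1 * K 1 2 + Cp 1 1 * K 1 3)) := by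
      linear_combination (K 1 2)^2 * g200 + (2*(K 1 2)*(K 1 3)) * g201 + (K 1 3)^2 * g211
    have f1_1 : 0 ≤ σ^2 - (K 1 2 * (Cp 0 0 * K 1 2 + Cp 0 1 * K 1 3) + K 1 3 * (Cp 0 1 * K 1 2 + Cp 1 1 * K 1 3)) := by
      have h := master 0 1 (-(Cp 0 0 * K 1 2 + Cp 0 1 * K 1 3)) (-(Cp 0 1 * K 1 2 + Cp 1 1 * K 1 3))
      linarith [h, hT2_1]
    have hT3_1 : K 2 2 * (0 - (Cp 0 0 * K 1 2 + Cp 0 1 * K 1 3))^2 + 2 * K 2 3 * ((0 - (Cp 0 0 * K 1 2 + Cp 0 1 * K 1 3)) * (1 - (Cp 0 1 * K 1 2 + Cp 1 1 * K 1 3))) + K 3 3 * (1 - (Cp 0 1 * K 1 2 + Cp 1 1 * K 1 3))^2 = K 3 3 - 2 * K 1 3 + (K 1 2 * (Cp 0 0 * K 1 2 + Cp 0 1 * K 1 3) + K 1 3 * (Cp 0 1 * K 1 2 + Cp 1 1 * K 1 3)) := by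
      linear_combination 2 * hr11 + (K 1 2)^2 * g200 + (2*(K 1 2)*(K 1 3)) * g201 + (K 1 3)^2 * g211
    have f2_1 : σ^2 - (K 1 2 * (Cp 0 0 * K 1 2 + Cp 0 1 * K 1 3) + K 1 3 * (Cp 0 1 * K 1 2 + Cp 1 1 * K 1 3)) ≤ D₂ := by
      have h := master 0 0 (0 - (Cp 0 0 * K 1 2 + Cp 0 1 * K 1 3)) (1 - (Cp 0 1 * K 1 2 + Cp 1 1 * K 1 3))
      linarith [h, hT3_1, hm2, e11]
    simp only [Matrix.det_fin_two, Matrix.mul_apply, Matrix.sub_apply, Matrix.transpose_apply, Fin.sum_univ_two, Matrix.cons_val', Matrix.cons_val_zero, Matrix.cons_val_one, Matrix.head_cons, Matrix.empty_val', Matrix.cons_val_fin_one, Matrix.head_fin_const, Matrix.of_apply] at hv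
    clear master p1 p2 p3 p4 hK g100 g101 g110 g111 g200 g201 g210 g211 hz00 hz01 hz10 hz11 hr00 hr01 hr10 hr11 hT2_0 hT2_1 hT3_0 hT3_1
    nlinarith [f1_0, f1_1, f2_0, f2_1, hv, hD₁.le, hD₂.le,
      sq_nonneg (ρ*σ^2 - ((K 0 2 * Cp 0 0 + K 0 3 * Cp 0 1) * K 1 2 + (K 0 2 * Cp 0 1 + K 0 3 * Cp 1 1) * K 1 3))]
end
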